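/- Let μ₁, μ₂ ∈ [R_min, R_max] with R_min ≤ R_max and V > 0. Then the squared Hellinger distance between N(μ₁, V) and N(μ₂, V) satisfies 2 − 2exp(−(μ₁−μ₂)²/(8V)) ≥ (μ₁ − μ₂)² / (2(R_max − R_min)² + 4V). -/

import Mathlib

/-! With `x = (μ₁ - μ₂)² / (8V)`, the bound `1 + x ≤ eˣ` gives `2 - 2e⁻ˣ ≥ 2x / (1 + x)
= (μ₁ - μ₂)² / (4V + (μ₁ - μ₂)² / 2)`, and `(μ₁ - μ₂)² ≤ (R_max - R_min)²` bounds the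
denominator. -/

open Real

lemma div_one_add_le_one_sub_exp_neg {x : ℝ} (hx : -1 < x) : x / (1 + x) ≤ 1 - exp (-x) := by
  have hpos : 0 < 1 + x := by linarith
  have hexp : exp (-x) ≤ (1 + x)⁻¹ := by
    rw [exp_neg]
    exact inv_anti₀ hpos (by linarith [add_one_le_exp x])
  have hsplit : x / (1 + x) = 1 - (1 + x)⁻¹ := by field_simp; ring
  linarith

lemma sq_sub_le_sq_of_mem_Icc {a b x y : ℝ} (hx : x ∈ Set.Icc a b) (hy : y ∈ Set.Icc a b) :
    (x - y) ^ 2 ≤ (b - a) ^ 2 := by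
  rw [← sq_abs]
  have hdist : |x - y| ≤ b - a := Real.dist_le_of_mem_Icc hx hy
  gcongr

theorem hellinger_sq_gaussian_lower_bound_general
    (Rmin Rmax μ₁ μ₂ V : ℝ) (hV : 0 < V)
    (h₁ : μ₁ ∈ Set.Icc Rmin Rmax) (h₂ : μ₂ ∈ Set.Icc Rmin Rmax) :
    2 - 2 * Real.exp (-(μ₁ - μ₂) ^ 2 / (8 * V)) ≥
      (μ₁ - μ₂) ^ 2 / (2 * (Rmax - Rmin) ^ 2 + 4 * V) := by
  set d := μ₁ - μ₂
  set x := d ^ 2 / (8 * V)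
  have hd : d ^ 2 ≤ (Rmax - Rmin) ^ 2 := sq_sub_le_sq_of_mem_Icc h₁ h₂
  have hx : -1 < x := by linarith [show 0 ≤ x by positivity]
  have hratio : 2 * (x / (1 + x)) = d ^ 2 / (4 * V + d ^ 2 / 2) := by
    simp only [x]; field_simp; ring
  calc d ^ 2 / (2 * (Rmax - Rmin) ^ 2 + 4 * V)
      ≤ d ^ 2 / (4 * V + d ^ 2 / 2) :=
        div_le_div_of_nonneg_left (sq_nonneg d) (by positivity)
          (by linarith [sq_nonneg d, sq_nonneg (Rmax - Rmin)])
    _ = 2 * (x / (1 + x)) := hratio.symm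
    _ ≤ 2 * (1 - exp (-x)) := by gcongr; exact div_one_add_le_one_sub_exp_neg hx
    _ = 2 - 2 * exp (-d ^ 2 / (8 * V)) := by rw [neg_div]; ring

theorem hellinger_sq_gaussian_lower_bound
    (Rmin Rmax μ₁ μ₂ V : ℝ) (hR : Rmin ≤ Rmax) (hV : 0 < V)
    (h₁ : μ₁ ∈ Set.Icc Rmin Rmax) (h₂ : μ₂ ∈ Set.Icc Rmin Rmax) :
    2 - 2 * Real.exp (-(μ₁ - μ₂) ^ 2 / (8 * V)) ≥
      (μ₁ - μ₂) ^ 2 / (2 * (Rmax - Rmin) ^ 2 + 4 * V) :=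
  hellinger_sq_gaussian_lower_bound_general Rmin Rmax μ₁ μ₂ V hV h₁ h₂
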